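/- Assume (H1)–(H3). Then there exists a constant C' depending only on C, u, θ and s such that for all integers m, j ≥ 0 and all K ≥ 1, |E[ξ̂_{m+j}^K ξ̂_m^K]| ≤ C' (m+j+1)^u K^{u+2} θ^{j/2}. -/

import Mathlib

open MeasureTheory ProbabilityTheory Filter Topology

/-!
Split `j = ⌊j/2⌋ + ⌈j/2⌉` and put `l = m + ⌊j/2⌋`. By (H2), `ξ̂_m^K` is the `𝓕_l`-measurable
variable `ξ_{m,l}^K - E[ξ_m^K]`, bounded by `2K`, plus an error that is below `θ^⌊j/2⌋` off a set
of measure `C K^u (m+1)^u θ^⌊j/2⌋`. Against the `𝓕_l`-measurable part, `ξ̂_{m+j}^K` may be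
replaced by `E[ξ̂_{m+j}^K | 𝓕_l]`, which by (H3) is `O((l+1)^u K^u θ^⌈j/2⌉)` off a set of
measure `C θ^⌈j/2⌉`. As all variables involved are bounded by `2K`, both contributions are
`O((m+j+1)^u K^{u+2} θ^{j/2 - 1})`.

The truncations `ξ_n^K` are a.e. measurable as limits in measure of the approximants `ξ_{n,n+k}^K`.
-/

section

variable {Ω : Type*} {m mΩ : MeasurableSpace Ω} {μ : Measure Ω}

lemma abs_integral_mul_le_of_abs_le {f g : Ω → ℝ} {M : ℝ} (hf : Integrable f μ)
    (hgM : ∀ᵐ ω ∂μ, |g ω| ≤ M) : |∫ ω, g ω * f ω ∂μ| ≤ M * ∫ ω, |f ω| ∂μ := by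
  calc |∫ ω, g ω * f ω ∂μ| ≤ ∫ ω, |g ω * f ω| ∂μ := abs_integral_le_integral_abs
    _ ≤ ∫ ω, M * |f ω| ∂μ := by
        refine integral_mono_of_nonneg (.of_forall fun _ => abs_nonneg _) (hf.abs.const_mul M) ?_
        filter_upwards [hgM] with ω hω
        rw [abs_mul]
        exact mul_le_mul_of_nonneg_right hω (abs_nonneg _)
    _ = M * ∫ ω, |f ω| ∂μ := integral_const_mul M _

lemma abs_integral_le_of_abs_le [IsProbabilityMeasure μ] {f : Ω → ℝ} {M : ℝ}
    (hfM : ∀ᵐ ω ∂μ, |f ω| ≤ M) : |∫ ω, f ω ∂μ| ≤ M := by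
  simpa using norm_integral_le_of_norm_le (integrable_const M) (f := f) hfM

lemma nonneg_of_ae_abs_le [NeZero μ] {f : Ω → ℝ} {M : ℝ} (hfM : ∀ᵐ ω ∂μ, |f ω| ≤ M) : 0 ≤ M :=
  let ⟨_, hω⟩ := hfM.exists
  (abs_nonneg _).trans hω

lemma ae_abs_sub_le_of_abs_le {f g : Ω → ℝ} {M : ℝ} (hfM : ∀ᵐ ω ∂μ, |f ω| ≤ M)
    (hgM : ∀ᵐ ω ∂μ, |g ω| ≤ M) : ∀ᵐ ω ∂μ, |f ω - g ω| ≤ 2 * M := by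
  filter_upwards [hfM, hgM] with ω hf hg
  linarith [abs_sub (f ω) (g ω)]

lemma integral_abs_le_of_abs_le_on [IsProbabilityMeasure μ] {f : Ω → ℝ} {S : Set Ω}
    {a M p : ℝ} (hf : Integrable f μ) (hS : NullMeasurableSet S μ) (ha : 0 ≤ a)
    (hfS : ∀ᵐ ω ∂μ, ω ∈ S → |f ω| ≤ a) (hfM : ∀ᵐ ω ∂μ, |f ω| ≤ M)
    (hSc : μ Sᶜ ≤ ENNReal.ofReal p) (hp : 0 ≤ p) :
    ∫ ω, |f ω| ∂μ ≤ a + M * p := by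
  rw [← integral_add_compl₀ hS hf.abs]
  gcongr
  · calc ∫ ω in S, |f ω| ∂μ ≤ ∫ _ in S, a ∂μ :=
          integral_mono_ae hf.abs.integrableOn (integrable_const a) ((ae_restrict_iff'₀ hS).2 hfS)
      _ ≤ a := by simpa using mul_le_of_le_one_left ha measureReal_le_one
  · calc ∫ ω in Sᶜ, |f ω| ∂μ ≤ ∫ _ in Sᶜ, M ∂μ :=
          integral_mono_ae hf.abs.integrableOn (integrable_const M) (ae_restrict_of_ae hfM)
      _ ≤ M * p := by
          rw [setIntegral_const, smul_eq_mul, mul_comm]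
          exact mul_le_mul_of_nonneg_left (ENNReal.toReal_le_of_le_ofReal hp hSc)
            (nonneg_of_ae_abs_le hfM)

lemma integral_abs_le_of_measure_abs_ge_le [IsProbabilityMeasure μ] {f : Ω → ℝ}
    {δ M p : ℝ} (hf : Integrable f μ) (hδ : 0 ≤ δ) (hfM : ∀ᵐ ω ∂μ, |f ω| ≤ M)
    (htail : μ {ω | δ ≤ |f ω|} ≤ ENNReal.ofReal p) (hp : 0 ≤ p) :
    ∫ ω, |f ω| ∂μ ≤ δ + M * p := by
  refine integral_abs_le_of_abs_le_on hf (S := {ω | |f ω| < δ})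
    (nullMeasurableSet_lt hf.abs.aemeasurable aemeasurable_const) hδ
    (.of_forall fun _ h => le_of_lt h) hfM ?_ hp
  simpa only [Set.compl_ofPred, not_lt] using htail

lemma aestronglyMeasurable_of_measure_abs_sub_ge_le {θ c : ℝ} (hθ0 : 0 < θ) (hθ1 : θ < 1)
    {f : ℕ → Ω → ℝ} {g : Ω → ℝ} (hf : ∀ k, AEStronglyMeasurable (f k) μ)
    (hfg : ∀ k, μ {ω | θ ^ k ≤ |g ω - f k ω|} ≤ ENNReal.ofReal (c * θ ^ k)) :
    AEStronglyMeasurable g μ := by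
  refine TendstoInMeasure.aestronglyMeasurable (u := atTop) hf ?_
  rw [tendstoInMeasure_iff_dist]
  intro ε hε
  have hθk : Tendsto (fun k : ℕ => θ ^ k) atTop (𝓝 0) :=
    tendsto_pow_atTop_nhds_zero_of_lt_one hθ0.le hθ1
  have hbound : Tendsto (fun k : ℕ => ENNReal.ofReal (c * θ ^ k)) atTop (𝓝 0) := by
    simpa using ENNReal.tendsto_ofReal (hθk.const_mul c)
  refine tendsto_of_tendsto_of_tendsto_of_le_of_le' tendsto_const_nhds hbound
    (.of_forall fun _ => zero_le) ?_
  filter_upwards [hθk.eventually (gt_mem_nhds hε)] with k hk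
  refine (measure_mono fun ω hω => ?_).trans (hfg k)
  simp only [Set.mem_ofPred_eq, Real.dist_eq, abs_sub_comm] at hω ⊢
  exact hk.le.trans hω

lemma abs_integral_mul_le_of_condExp [IsFiniteMeasure μ] (hm : m ≤ mΩ)
    {f g g' : Ω → ℝ} {M : ℝ} (hf : Integrable f μ) (hfM : ∀ᵐ ω ∂μ, |f ω| ≤ M)
    (hg : Integrable g μ) (hg' : StronglyMeasurable[m] g') (hg'M : ∀ᵐ ω ∂μ, |g' ω| ≤ M) :
    |∫ ω, f ω * g ω ∂μ| ≤ M * ∫ ω, |g ω - g' ω| ∂μ + M * ∫ ω, |μ[f|m] ω| ∂μ := by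
  have hg'int : Integrable g' μ :=
    .of_bound (hg'.mono hm).aestronglyMeasurable M (by simpa using hg'M)
  have hg'f : Integrable (g' * f) μ :=
    hf.bdd_mul (hg'.mono hm).aestronglyMeasurable (by simpa using hg'M)
  have hfg : Integrable (fun ω => f ω * (g ω - g' ω)) μ :=
    (hg.sub hg'int).bdd_mul hf.aestronglyMeasurable (by simpa using hfM)
  have hpull : ∫ ω, g' ω * f ω ∂μ = ∫ ω, g' ω * μ[f|m] ω ∂μ := calc
    ∫ ω, g' ω * f ω ∂μ = ∫ ω, μ[g' * f|m] ω ∂μ := (integral_condExp hm).symm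
    _ = ∫ ω, g' ω * μ[f|m] ω ∂μ :=
      integral_congr_ae (condExp_mul_of_stronglyMeasurable_left hg' hg'f hf)
  have hsplit : ∫ ω, f ω * g ω ∂μ = ∫ ω, f ω * (g ω - g' ω) ∂μ + ∫ ω, g' ω * f ω ∂μ := by
    rw [← integral_add hfg (g := fun ω => g' ω * f ω) hg'f]
    exact integral_congr_ae (.of_forall fun ω => by ring)
  rw [hsplit, hpull]
  refine (abs_add_le _ _).trans (add_le_add ?_ ?_)
  · simpa only [mul_comm] using
      abs_integral_mul_le_of_abs_le (f := fun ω => g ω - g' ω) (hg.sub hg'int) hfM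
  · exact abs_integral_mul_le_of_abs_le integrable_condExp hg'M

lemma abs_integral_mul_le_of_tail_of_condExp [IsProbabilityMeasure μ]
    (hm : m ≤ mΩ) {f g g' : Ω → ℝ} {S : Set Ω} {M N δ p a q : ℝ}
    (hf : Integrable f μ) (hfM : ∀ᵐ ω ∂μ, |f ω| ≤ M) (hg : Integrable g μ)
    (hg' : StronglyMeasurable[m] g') (hg'M : ∀ᵐ ω ∂μ, |g' ω| ≤ M)
    (hgN : ∀ᵐ ω ∂μ, |g ω - g' ω| ≤ N) (hδ : 0 ≤ δ) (hp : 0 ≤ p)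
    (htail : μ {ω | δ ≤ |g ω - g' ω|} ≤ ENNReal.ofReal p)
    (hS : NullMeasurableSet S μ) (ha : 0 ≤ a) (hq : 0 ≤ q)
    (hcond : ∀ᵐ ω ∂μ, ω ∈ S → |μ[f|m] ω| ≤ a) (hSc : μ Sᶜ ≤ ENNReal.ofReal q) :
    |∫ ω, f ω * g ω ∂μ| ≤ M * (δ + N * p) + M * (a + M * q) := by
  have hg'int : Integrable g' μ :=
    .of_bound (hg'.mono hm).aestronglyMeasurable M (by simpa using hg'M)
  have hM : 0 ≤ M := nonneg_of_ae_abs_le hfM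
  refine (abs_integral_mul_le_of_condExp hm hf hfM hg hg' hg'M).trans (add_le_add ?_ ?_)
  · exact mul_le_mul_of_nonneg_left
      (integral_abs_le_of_measure_abs_ge_le (hg.sub hg'int) hδ hgN htail hp) hM
  · exact mul_le_mul_of_nonneg_left (integral_abs_le_of_abs_le_on integrable_condExp
      hS ha hcond (ae_bdd_abs_condExp_of_ae_bdd_abs hfM) hSc hq) hM

end

lemma pow_half_le_rpow_half_div {θ : ℝ} (hθ0 : 0 < θ) (hθ1 : θ < 1) (j : ℕ) :
    θ ^ (j / 2) ≤ θ ^ ((j : ℝ) / 2) / θ := by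
  rw [le_div_iff₀ hθ0, ← pow_succ, ← Real.rpow_natCast]
  refine Real.rpow_le_rpow_of_exponent_ge hθ0 hθ1.le ?_
  have : (j : ℝ) ≤ 2 * ((j / 2 : ℕ) : ℝ) + 1 := by exact_mod_cast (by omega : j ≤ 2 * (j / 2) + 1)
  push_cast
  linarith

lemma pow_sub_half_le_rpow_half {θ : ℝ} (hθ0 : 0 < θ) (hθ1 : θ < 1) (j : ℕ) :
    θ ^ (j - j / 2) ≤ θ ^ ((j : ℝ) / 2) := by
  rw [← Real.rpow_natCast]
  refine Real.rpow_le_rpow_of_exponent_ge hθ0 hθ1.le ?_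
  have : (j : ℝ) ≤ 2 * ((j - j / 2 : ℕ) : ℝ) := by exact_mod_cast (by omega : j ≤ 2 * (j - j / 2))
  linarith

lemma split_error_le_rate {C u θ K : ℝ} (hC : 0 ≤ C) (hu : 0 ≤ u) (hθ0 : 0 < θ) (hθ1 : θ < 1)
    (hK : 1 ≤ K) (m j : ℕ) :
    2 * K * (θ ^ (j / 2) + 2 * K * (C * K ^ u * ((m : ℝ) + 1) ^ u * θ ^ (j / 2))) +
        2 * K * (C * (((m + j / 2 : ℕ) : ℝ) + 1) ^ u * K ^ u * θ ^ (j - j / 2) +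
          2 * K * (C * θ ^ (j - j / 2))) ≤
      (10 * C + 2) / θ * ((m : ℝ) + j + 1) ^ u * K ^ (u + 2) * θ ^ ((j : ℝ) / 2) := by
  have hP1 : 1 ≤ ((m : ℝ) + j + 1) ^ u := Real.one_le_rpow (le_add_of_nonneg_left (by positivity)) hu
  have hPm : ((m : ℝ) + 1) ^ u ≤ ((m : ℝ) + j + 1) ^ u := by
    gcongr
    exact le_add_of_nonneg_right (Nat.cast_nonneg j) |>.trans_eq (by ring)
  have hPl : (((m + j / 2 : ℕ) : ℝ) + 1) ^ u ≤ ((m : ℝ) + j + 1) ^ u := by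
    gcongr
    exact_mod_cast (by omega : m + j / 2 ≤ m + j)
  have hθ_floor := pow_half_le_rpow_half_div hθ0 hθ1 j
  have hθ_ceil : θ ^ (j - j / 2) ≤ θ ^ ((j : ℝ) / 2) / θ :=
    (pow_sub_half_le_rpow_half hθ0 hθ1 j).trans (le_div_self (by positivity) hθ0 hθ1.le)
  set P := ((m : ℝ) + j + 1) ^ u
  set Θ := θ ^ ((j : ℝ) / 2) / θ
  have hKu : 1 ≤ K ^ u := Real.one_le_rpow hK hu
  have hK2 : K ≤ K ^ 2 := by nlinarith
  have hK2u : K ^ 2 ≤ K ^ 2 * K ^ u := le_mul_of_one_le_right (by positivity) hKu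
  calc _ = 2 * 1 * K * θ ^ (j / 2) + 4 * C * ((m : ℝ) + 1) ^ u * (K ^ 2 * K ^ u) * θ ^ (j / 2)
          + 2 * C * (((m + j / 2 : ℕ) : ℝ) + 1) ^ u * (K * K ^ u) * θ ^ (j - j / 2)
          + 4 * C * 1 * K ^ 2 * θ ^ (j - j / 2) := by ring
    _ ≤ 2 * P * (K ^ 2 * K ^ u) * Θ + 4 * C * P * (K ^ 2 * K ^ u) * Θ
          + 2 * C * P * (K ^ 2 * K ^ u) * Θ + 4 * C * P * (K ^ 2 * K ^ u) * Θ := by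
      gcongr
      exact hK2.trans hK2u
    _ = _ := by
      rw [Real.rpow_add (by positivity), Real.rpow_two]
      simp only [Θ]
      ring

theorem truncated_mixing_bound_general
    {Ω : Type*} [MeasurableSpace Ω] (μ : MeasureTheory.Measure Ω) [IsProbabilityMeasure μ]
    (C u θ : ℝ) (hC : 0 < C) (hu : 0 < u) (hθ : θ ∈ Set.Ioo (0:ℝ) 1)
    (ξK : ℝ → ℕ → Ω → ℝ)
    (ξhatK : ℝ → ℕ → Ω → ℝ)
    (hξhatK : ∀ K n ω, ξhatK K n ω = ξK K n ω - ∫ ω', ξK K n ω' ∂μ)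
    -- (H1)
    (H1a : ∀ K, 1 ≤ K → ∀ n, ∀ᵐ ω ∂μ, |ξK K n ω| ≤ K)
    -- (H2)
    (F : ℕ → MeasurableSpace Ω) (hFle : ∀ l, F l ≤ ‹MeasurableSpace Ω›)
    (ξapp : ℝ → ℕ → ℕ → Ω → ℝ)   -- `ξapp K l k` is the variable `ξ_{l, l+k}^K`
    (H2meas : ∀ K l k, 1 ≤ K → Measurable[F (l + k)] (ξapp K l k))
    (H2bdd : ∀ K l k, 1 ≤ K → ∀ᵐ ω ∂μ, |ξapp K l k ω| ≤ K)
    (H2prob : ∀ K l k, 1 ≤ K →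
      μ {ω | θ ^ k ≤ |ξK K l ω - ξapp K l k ω|} ≤
        ENNReal.ofReal (C * K ^ u * ((l : ℝ) + 1) ^ u * θ ^ k))
    -- (H3)
    (G : ℕ → ℕ → Set Ω) (hGmeas : ∀ l k, MeasurableSet (G l k))
    (H3prob : ∀ l k, μ (G l k)ᶜ ≤ ENNReal.ofReal (C * θ ^ k))
    (H3 : ∀ K l k, 1 ≤ K → ∀ᵐ ω ∂μ, ω ∈ G l k →
      |(μ[ξhatK K (l + k)|F l]) ω| ≤ C * ((l : ℝ) + 1) ^ u * K ^ u * θ ^ k)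
    :
    ∃ C' : ℝ, 0 < C' ∧
      ∀ (m j : ℕ) (K : ℝ), 1 ≤ K →
        |∫ ω, ξhatK K (m + j) ω * ξhatK K m ω ∂μ| ≤
          C' * ((m : ℝ) + j + 1) ^ u * K ^ (u + 2) * θ ^ ((j : ℝ) / 2) := by
  obtain ⟨hθ0, hθ1⟩ := hθ
  have hξK_int : ∀ K n, 1 ≤ K → Integrable (ξK K n) μ := fun K n hK =>
    .of_bound (aestronglyMeasurable_of_measure_abs_sub_ge_le hθ0 hθ1
      (fun k => ((H2meas K n k hK).mono (hFle (n + k)) le_rfl).aestronglyMeasurable)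
      fun k => H2prob K n k hK) K (by simpa using H1a K hK n)
  have hξK_mean : ∀ K n, 1 ≤ K → ∀ᵐ _ ∂μ, |∫ ω, ξK K n ω ∂μ| ≤ K := fun K n hK =>
    .of_forall fun _ => abs_integral_le_of_abs_le (H1a K hK n)
  refine ⟨(10 * C + 2) / θ, by positivity, fun m j K hK => ?_⟩
  have hξhatK_int : ∀ n, Integrable (ξhatK K n) μ := fun n => by
    rw [funext (hξhatK K n)]
    exact (hξK_int K n hK).sub (integrable_const _)
  have hξhatK_bdd : ∀ n, ∀ᵐ ω ∂μ, |ξhatK K n ω| ≤ 2 * K := fun n => by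
    simpa only [hξhatK] using ae_abs_sub_le_of_abs_le (H1a K hK n) (hξK_mean K n hK)
  have hcond := H3 K (m + j / 2) (j - j / 2) hK
  rw [show m + j / 2 + (j - j / 2) = m + j by omega] at hcond
  refine (abs_integral_mul_le_of_tail_of_condExp (hFle (m + j / 2))
    (g' := fun ω => ξapp K m (j / 2) ω - ∫ ω', ξK K m ω' ∂μ)
    (δ := θ ^ (j / 2)) (p := C * K ^ u * ((m : ℝ) + 1) ^ u * θ ^ (j / 2))
    (hξhatK_int (m + j)) (hξhatK_bdd (m + j)) (hξhatK_int m)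
    ((H2meas K m (j / 2) hK).stronglyMeasurable.sub stronglyMeasurable_const)
    (ae_abs_sub_le_of_abs_le (H2bdd K m (j / 2) hK) (hξK_mean K m hK))
    (by simpa only [hξhatK, sub_sub_sub_cancel_right] using
      ae_abs_sub_le_of_abs_le (H1a K hK m) (H2bdd K m (j / 2) hK))
    (by positivity) (by positivity)
    (by simpa only [hξhatK, sub_sub_sub_cancel_right] using H2prob K m (j / 2) hK)
    (hGmeas _ _).nullMeasurableSet (by positivity) (by positivity) hcond (H3prob _ _)).trans ?_
  exact split_error_le_rate hC.le hu.le hθ0 hθ1 hK m j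

/-- Mixing bound for truncated variables: under (H1)–(H3) there is a constant `C'`
(depending only on `C, u, θ, s`) with
`|E[ξ̂_{m+j}^K ξ̂_m^K]| ≤ C' (m+j+1)^u K^{u+2} θ^{j/2}` for all `m, j ≥ 0` and `K ≥ 1`. -/
theorem truncated_mixing_bound
    {Ω : Type*} [MeasurableSpace Ω] (μ : MeasureTheory.Measure Ω) [IsProbabilityMeasure μ]
    (C u θ s : ℝ) (hC : 0 < C) (hu : 0 < u) (hθ : θ ∈ Set.Ioo (0:ℝ) 1) (hs : 2 < s)
    (ξ : ℕ → Ω → ℝ) (hξ : ∀ n, Integrable (ξ n) μ)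
    (ξhat : ℕ → Ω → ℝ) (hξhat : ∀ n ω, ξhat n ω = ξ n ω - ∫ ω', ξ n ω' ∂μ)
    (ξK : ℝ → ℕ → Ω → ℝ)
    (ξhatK : ℝ → ℕ → Ω → ℝ)
    (hξhatK : ∀ K n ω, ξhatK K n ω = ξK K n ω - ∫ ω', ξK K n ω' ∂μ)
    -- (H1)
    (H1a : ∀ K, 1 ≤ K → ∀ n, ∀ᵐ ω ∂μ, |ξK K n ω| ≤ K)
    (H1b1 : ∀ K, 1 ≤ K → ∀ n, ∫ ω, |ξK K n ω - ξ n ω| ∂μ ≤ C * K ^ (1 - s))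
    (H1b2 : ∀ K, 1 ≤ K → ∀ n, ∫ ω, (ξK K n ω - ξ n ω) ^ 2 ∂μ ≤ C * K ^ (2 - s))
    -- (H2)
    (F : ℕ → MeasurableSpace Ω) (hFmono : Monotone F) (hFle : ∀ l, F l ≤ ‹MeasurableSpace Ω›)
    (ξapp : ℝ → ℕ → ℕ → Ω → ℝ)   -- `ξapp K l k` is the variable `ξ_{l, l+k}^K`
    (H2meas : ∀ K l k, 1 ≤ K → Measurable[F (l + k)] (ξapp K l k))
    (H2bdd : ∀ K l k, 1 ≤ K → ∀ᵐ ω ∂μ, |ξapp K l k ω| ≤ K)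
    (H2exp : ∀ K l k, 1 ≤ K → ∫ ω, ξapp K l k ω ∂μ = ∫ ω, ξK K l ω ∂μ)
    (H2prob : ∀ K l k, 1 ≤ K →
      μ {ω | θ ^ k ≤ |ξK K l ω - ξapp K l k ω|} ≤
        ENNReal.ofReal (C * K ^ u * ((l : ℝ) + 1) ^ u * θ ^ k))
    -- (H3)
    (G : ℕ → ℕ → Set Ω) (hGmeas : ∀ l k, MeasurableSet (G l k))
    (H3prob : ∀ l k, μ (G l k)ᶜ ≤ ENNReal.ofReal (C * θ ^ k))
    (H3 : ∀ K l k, 1 ≤ K → ∀ᵐ ω ∂μ, ω ∈ G l k →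
      |(μ[ξhatK K (l + k)|F l]) ω| ≤ C * ((l : ℝ) + 1) ^ u * K ^ u * θ ^ k)
    :
    ∃ C' : ℝ, 0 < C' ∧
      ∀ (m j : ℕ) (K : ℝ), 1 ≤ K →
        |∫ ω, ξhatK K (m + j) ω * ξhatK K m ω ∂μ| ≤
          C' * ((m : ℝ) + j + 1) ^ u * K ^ (u + 2) * θ ^ ((j : ℝ) / 2) :=
  truncated_mixing_bound_general μ C u θ hC hu hθ ξK ξhatK hξhatK H1a F hFle ξapp H2meas H2bdd
    H2prob G hGmeas H3prob H3
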